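/- (Harada-Sai Lemma) Let R be a ring and M_1 → M_2 → ... → M_s a sequence of R-homomorphisms f_1, ..., f_{s-1} such that (i) each M_i is indecomposable of finite length, (ii) no f_i is an isomorphism, and (iii) the composition f_{s-1}∘f_{s-2}∘...∘f_1 is non-zero. If the length ℓ_R(M_i) ≤ b for each i, then s ≤ 2^b − 1. -/

import Mathlib

/-!
Split a chain of `2^(k+1) - 1` non-isomorphisms as `h ∘ f ∘ g`, where `g` and `h` are chains of
`2^k - 1` maps whose images have length `≤ n`. If `h ∘ f ∘ g` still has image of length `n`,
then `U = im g`, `f U` and `h (f U)` all have length `n`, so `h ∘ f` is injective on `U` and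
`h (f U) = im h`. This gives `N = U ⊕ ker (h ∘ f)` and `N' = f U ⊕ ker h`, and indecomposability
of `N` and `N'` makes `f` bijective. Hence every doubling of the chain lowers the length of the
image of the composite by one, and a chain of `2^b - 1` maps composes to zero.
-/

open CategoryTheory TensorProduct

universe u v

noncomputable section

/-- For a local ring this is the maximal ideal (it is the Jacobson radical of `⊥`);
phrasing it via the Jacobson radical makes the definition available without an
`IsLocalRing` instance (e.g. for quotients of local rings). -/
def maxIdl (R : Type u) [CommRing R] : Ideal R := (⊥ : Ideal R).jacobson

/-- The length of a module: the supremum of lengths of strictly increasing chains of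
submodules, i.e. the Krull dimension of the lattice of submodules. -/
def modLength (R : Type u) [Ring R] (M : Type v) [AddCommGroup M] [Module R M] :
    WithBot ℕ∞ :=
  Order.krullDim (Submodule R M)

/-- The depth of a module over a local ring: the supremum of the lengths of
`M`-regular sequences contained in the maximal ideal. -/
def depthNat (R : Type u) [CommRing R] (M : Type v) [AddCommGroup M] [Module R M] : ℕ :=
  sSup {n : ℕ | ∃ rs : List R, rs.length = n ∧ (∀ r ∈ rs, r ∈ maxIdl R) ∧
    RingTheory.Sequence.IsRegular M rs}

/-- A maximal Cohen-Macaulay (MCM) module: finitely generated with depth equal to the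
Krull dimension of the ring. -/
def IsMCM (R : Type u) [CommRing R] (M : Type v) [AddCommGroup M] [Module R M] : Prop :=
  Module.Finite R M ∧ ((depthNat R M : ℕ∞) : WithBot ℕ∞) = ringKrullDim R

/-- A (local) ring is Cohen-Macaulay if its depth equals its Krull dimension. -/
def IsCMRing (R : Type u) [CommRing R] : Prop :=
  ((depthNat R R : ℕ∞) : WithBot ℕ∞) = ringKrullDim R

/-- An indecomposable module: nonzero, and not the internal direct sum of two nonzero
submodules. -/
def Indec (R : Type u) [Ring R] (M : Type v) [AddCommGroup M] [Module R M] : Prop :=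
  Nontrivial M ∧ ∀ N₁ N₂ : Submodule R M, IsCompl N₁ N₂ → N₁ = ⊥ ∨ N₂ = ⊥

/-- The Hilbert-Samuel function `n ↦ ℓ_R (M / mⁿM)` (with values in `ℤ`, for taking
finite differences). -/
def hsFun (R : Type u) [CommRing R] (M : Type v) [AddCommGroup M] [Module R M]
    (n : ℕ) : ℤ :=
  (((((modLength R (M ⧸ ((maxIdl R ^ n) • (⊤ : Submodule R M)))).unbotD 0).untopD 0 : ℕ) : ℤ))

/-- Forward difference operator. -/
def fdiff (f : ℕ → ℤ) : ℕ → ℤ := fun n => f (n + 1) - f n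

/-- Krull dimension of a ring, as a natural number. -/
def dimNat (R : Type u) [CommRing R] : ℕ := ((ringKrullDim R).unbotD 0).untopD 0

/-- The Hilbert-Samuel multiplicity `e(m, M)` of the maximal ideal on `M`, where
`d = dim R`: the eventually constant value of the `d`-th finite difference of the
Hilbert-Samuel function `n ↦ ℓ(M/mⁿM)`. -/
def eMult (R : Type u) [CommRing R] (M : Type v) [AddCommGroup M] [Module R M] : ℕ :=
  sSup {e : ℕ | ∀ᶠ n in Filter.atTop, fdiff^[dimNat R] (hsFun R M) n = (e : ℤ)}

/-- A local ring has finite CM type if it has only finitely many indecomposable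
maximal Cohen-Macaulay modules up to isomorphism. -/
def FiniteCMType (R : Type u) [CommRing R] : Prop :=
  ∃ S : Set (ModuleCat.{u} R), S.Finite ∧
    ∀ M : ModuleCat.{u} R, IsMCM R M → Indec R M → ∃ N ∈ S, Nonempty (M ≃ₗ[R] N)

/-- A local ring has bounded CM type if there is a bound on the multiplicities of the
indecomposable maximal Cohen-Macaulay modules. -/
def BoundedCMType (R : Type u) [CommRing R] : Prop :=
  ∃ B : ℕ, ∀ M : ModuleCat.{u} R, IsMCM R M → Indec R M → eMult R M ≤ B

/-- A local ring has strongly unbounded CM type if there is an increasing sequence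
`n₁ < n₂ < ⋯` of positive integers such that for every `i` there are infinitely many
pairwise non-isomorphic indecomposable MCM modules of multiplicity `nᵢ`. -/
def StronglyUnboundedCMType (R : Type u) [CommRing R] : Prop :=
  ∃ f : ℕ → ℕ, StrictMono f ∧ (∀ i, 0 < f i) ∧ ∀ i, ∃ M : ℕ → ModuleCat.{u} R,
    (∀ j, IsMCM R (M j) ∧ Indec R (M j) ∧ eMult R (M j) = f i) ∧
    ∀ j j', j ≠ j' → IsEmpty ((M j : Type u) ≃ₗ[R] (M j'))


/-- The composite `f_{s-1} ∘ ⋯ ∘ f_1` of a chain of linear maps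
`M 0 → M 1 → ⋯ → M s`. -/
def compChain (R : Type u) [Ring R] : ∀ {s : ℕ} (M : Fin (s + 1) → ModuleCat.{u} R),
    (∀ i : Fin s, (M i.castSucc : Type u) →ₗ[R] M i.succ) →
      ((M 0 : Type u) →ₗ[R] M (Fin.last s))
  | 0, _, _ => LinearMap.id
  | s + 1, M, f =>
      (f (Fin.last s)).comp (compChain R (fun i => M i.castSucc) (fun i => f i.castSucc))

section Length

open Module

variable {R : Type*} [Ring R] {M N : Type*} [AddCommGroup M] [Module R M]
  [AddCommGroup N] [Module R N]

theorem LinearMap.injective_of_surjective_of_length_eq {φ : M →ₗ[R] N}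
    (hφ : Function.Surjective φ) (hlen : length R N = length R M) (hfin : length R M ≠ ⊤) :
    Function.Injective φ := by
  have hadd := length_eq_add_of_exact _ φ (ker φ).injective_subtype hφ φ.exact_subtype_ker_map
  rw [hlen] at hadd
  have hker : length R (ker φ) = 0 :=
    WithTop.add_right_cancel hfin (hadd.symm.trans (zero_add _).symm)
  rw [length_eq_zero_iff, Submodule.subsingleton_iff_eq_bot] at hker
  exact ker_eq_bot.mp hker

namespace Submodule

theorem length_map_le (φ : M →ₗ[R] N) (p : Submodule R M) :
    length R (p.map φ) ≤ length R p :=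
  length_le_of_surjective _ (φ.submoduleMap_surjective p)

theorem ne_bot_of_length_ne_zero {p : Submodule R M} (hp : length R p ≠ 0) : p ≠ ⊥ := by
  rintro rfl
  exact hp length_bot

theorem eq_of_le_of_length_le {p q : Submodule R M} (hpq : p ≤ q)
    (hlen : length R q ≤ length R p) (hfin : length R p ≠ ⊤) : p = q := by
  by_contra hne
  have := Order.height_strictMono (lt_of_le_of_ne hpq hne)
    (by simpa only [length_submodule] using hfin.lt_top)
  simp only [← length_submodule] at this
  exact (this.trans_le hlen).false

theorem disjoint_ker_of_length_map_eq {φ : M →ₗ[R] N} {p : Submodule R M}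
    (hlen : length R (p.map φ) = length R p) (hfin : length R p ≠ ⊤) :
    Disjoint p (LinearMap.ker φ) := by
  have hinj := LinearMap.injective_of_surjective_of_length_eq (φ.submoduleMap_surjective p)
    hlen hfin
  refine LinearMap.disjoint_ker.mpr fun x hx hφx => ?_
  simpa using congrArg Subtype.val (@hinj ⟨x, hx⟩ 0 (Subtype.ext (by simpa using hφx)))

end Submodule

end Length

section HaradaSaiStep

open Module LinearMap Submodule

variable {R : Type*} [Ring R] {Q N N' P : Type*} [AddCommGroup Q] [Module R Q]
  [AddCommGroup N] [Module R N] [AddCommGroup N'] [Module R N'] [AddCommGroup P] [Module R P]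

theorem Indec.injective_of_map_eq_range (hN : Indec R N) {φ : N →ₗ[R] P} {p : Submodule R N}
    (hp : p ≠ ⊥) (hdis : Disjoint p (ker φ)) (hmap : p.map φ = range φ) :
    Function.Injective φ :=
  ker_eq_bot.mp ((hN.2 p _ ⟨hdis, map_eq_range_iff.mp hmap⟩).resolve_left hp)

theorem bijective_of_le_length_range_comp (hN : Indec R N) (hN' : Indec R N')
    (g : Q →ₗ[R] N) (f : N →ₗ[R] N') (h : N' →ₗ[R] P) {n : ℕ} (hn : n ≠ 0)
    (hg : length R (range g) ≤ n) (hh : length R (range h) ≤ n)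
    (hhfg : n ≤ length R (range (h ∘ₗ f ∘ₗ g))) : Function.Bijective f := by
  set U := range g
  set V := U.map f
  have hrange_comp : range (h ∘ₗ f ∘ₗ g) = V.map h := by rw [range_comp, range_comp]
  rw [hrange_comp] at hhfg
  have hWV := length_map_le h V
  have hVU := length_map_le f U
  have hU : length R U = n := le_antisymm hg (hhfg.trans (hWV.trans hVU))
  have hV : length R V = n := le_antisymm (hVU.trans hg) (hhfg.trans hWV)
  have hW : length R (V.map h) = n := le_antisymm (hWV.trans hV.le) hhfg
  have hfin : (n : ℕ∞) ≠ ⊤ := ENat.natCast_ne_top n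
  have hrange_h : V.map h = range h :=
    eq_of_le_of_length_le map_le_range (hh.trans hW.ge) (hW ▸ hfin)
  have hinj_h : Function.Injective h :=
    hN'.injective_of_map_eq_range (ne_bot_of_length_ne_zero (by rw [hV]; exact_mod_cast hn))
      (disjoint_ker_of_length_map_eq (hW.trans hV.symm) (hV ▸ hfin)) hrange_h
  have hmap_hf : U.map (h ∘ₗ f) = V.map h := map_comp f h U
  have hrange_hf : range (h ∘ₗ f) = range h :=
    le_antisymm (range_comp_le_range f h) (hrange_h ▸ hmap_hf ▸ map_le_range)
  have hinj_hf : Function.Injective (h ∘ₗ f) :=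
    hN.injective_of_map_eq_range (ne_bot_of_length_ne_zero (by rw [hU]; exact_mod_cast hn))
      (disjoint_ker_of_length_map_eq (hmap_hf ▸ hW.trans hU.symm) (hU ▸ hfin))
      (hmap_hf.trans (hrange_h.trans hrange_hf.symm))
  refine ⟨Function.Injective.of_comp (f := h) hinj_hf,
    range_eq_top.mp (map_injective_of_injective hinj_h ?_)⟩
  rw [← range_comp, Submodule.map_top, hrange_hf]

theorem length_range_comp_le_sub_one (hN : Indec R N) (hN' : Indec R N')
    (g : Q →ₗ[R] N) (f : N →ₗ[R] N') (h : N' →ₗ[R] P) (hf : ¬ Function.Bijective f) {n : ℕ}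
    (hg : length R (range g) ≤ n) (hh : length R (range h) ≤ n) :
    length R (range (h ∘ₗ f ∘ₗ g)) ≤ (n - 1 : ℕ) := by
  rcases Nat.eq_zero_or_pos n with rfl | hn
  · rw [← comp_assoc, range_comp]
    exact (length_map_le _ _).trans hg
  by_contra hlt
  refine hf (bijective_of_le_length_range_comp hN hN' g f h hn.ne' hg hh ?_)
  calc (n : ℕ∞) = (n - 1 : ℕ) + 1 := by norm_cast; omega
    _ ≤ _ := Order.add_one_le_of_lt (not_le.mp hlt)

end HaradaSaiStep

section Chains

open Module LinearMap

theorem compChain_add (R : Type u) [Ring R] (a : ℕ) :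
    ∀ (c : ℕ) (M : Fin (a + c + 1) → ModuleCat.{u} R)
      (f : ∀ i : Fin (a + c), (M i.castSucc : Type u) →ₗ[R] M i.succ),
    compChain R M f =
      (compChain R (fun t : Fin (c + 1) => M ⟨a + t, by omega⟩)
        (fun t : Fin c => f ⟨a + t, by omega⟩)) ∘ₗ
      (compChain R (fun t : Fin (a + 1) => M ⟨t, by omega⟩) (fun t : Fin a => f ⟨t, by omega⟩))
  | 0, _, _ => rfl
  | c + 1, M, f =>
    (congrArg (f (Fin.last (a + c))).comp
      (compChain_add R a c (fun i => M i.castSucc) (fun i => f i.castSucc))).trans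
    (comp_assoc _ _ _).symm

theorem compChain_add_succ (R : Type u) [Ring R] (a c : ℕ)
    (M : Fin (a + 1 + c + 1) → ModuleCat.{u} R)
    (f : ∀ i : Fin (a + 1 + c), (M i.castSucc : Type u) →ₗ[R] M i.succ) :
    compChain R M f =
      (compChain R (fun t : Fin (c + 1) => M ⟨a + 1 + t, by omega⟩)
        (fun t : Fin c => f ⟨a + 1 + t, by omega⟩)) ∘ₗ f ⟨a, by omega⟩ ∘ₗ
      (compChain R (fun t : Fin (a + 1) => M ⟨t, by omega⟩) (fun t : Fin a => f ⟨t, by omega⟩)) :=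
  compChain_add R (a + 1) c M f

theorem length_range_compChain_le (R : Type u) [Ring R] (b k : ℕ) :
    ∀ {s : ℕ} (M : Fin (s + 1) → ModuleCat.{u} R)
      (f : ∀ i : Fin s, (M i.castSucc : Type u) →ₗ[R] M i.succ),
      2 ^ k - 1 ≤ s → (∀ i, Indec R (M i)) → (∀ i, length R (M i) ≤ b) →
      (∀ i, ¬ Function.Bijective (f i)) →
      length R (range (compChain R M f)) ≤ (b - k : ℕ) := by
  induction k with
  | zero =>
    intro s M f _ _ hlen _
    exact (length_le_of_injective _ (range _).injective_subtype).trans (hlen _)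
  | succ k ih =>
    intro s M f hs hind hlen hnoiso
    have hk : 2 ^ (k + 1) = 2 ^ k + 2 ^ k := by ring
    have hk' : 1 ≤ 2 ^ k := Nat.one_le_two_pow
    obtain ⟨a, c, rfl, ha, hc⟩ : ∃ a c, s = a + 1 + c ∧ 2 ^ k - 1 ≤ a ∧ 2 ^ k - 1 ≤ c :=
      ⟨2 ^ k - 1, s - 2 ^ k, by omega, le_rfl, by omega⟩
    rw [compChain_add_succ R a c M f, ← Nat.sub_sub]
    refine length_range_comp_le_sub_one ?_ ?_ _ _ _ ?_ ?_ ?_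
    · exact hind _
    · exact hind _
    · exact hnoiso _
    · exact ih (fun t : Fin (a + 1) => M ⟨t, by omega⟩) (fun t : Fin a => f ⟨t, by omega⟩) ha
        (fun _ => hind _) (fun _ => hlen _) (fun _ => hnoiso _)
    · exact ih (fun t : Fin (c + 1) => M ⟨a + 1 + t, by omega⟩)
        (fun t : Fin c => f ⟨a + 1 + t, by omega⟩) hc
        (fun _ => hind _) (fun _ => hlen _) (fun _ => hnoiso _)

end Chains

/-- **Harada–Sai Lemma.**  Let `R` be a ring and `M 0 → M 1 → ⋯ → M s` a sequence of
`R`-homomorphisms such that each `M i` is indecomposable of finite length `≤ b`, no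
`f i` is an isomorphism, and the composite is non-zero.  Then the number of modules in
the chain is at most `2^b - 1`. -/
theorem stmt_10 (R : Type u) [Ring R] (b s : ℕ)
    (M : Fin (s + 1) → ModuleCat.{u} R)
    (f : ∀ i : Fin s, (M i.castSucc : Type u) →ₗ[R] M i.succ)
    (hind : ∀ i, Indec R (M i))
    (hlen : ∀ i, modLength R (M i) ≤ ((b : ℕ∞) : WithBot ℕ∞))
    (hnoiso : ∀ i, ¬ Function.Bijective (f i))
    (hcomp : compChain R M f ≠ 0) :
    s + 1 ≤ 2 ^ b - 1 := by
  by_contra hlong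
  have hlen' (i) : Module.length R (M i) ≤ b := by
    rw [← WithBot.coe_le_coe, Module.coe_length]
    exact hlen i
  have hzero := length_range_compChain_le R b b M f (by omega) hind hlen' hnoiso
  rw [Nat.sub_self, Nat.cast_zero, nonpos_iff_eq_zero, Module.length_eq_zero_iff,
    Submodule.subsingleton_iff_eq_bot, LinearMap.range_eq_bot] at hzero
  exact hcomp hzero

end
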